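/- Let B be a regular local ring with residue field κ and maximal ideal m, let n be a natural number, and let u ∈ B be a unit such that the polynomial X^n − ū is irreducible over κ, where ū is the image of u in κ (equivalently, [κ(ū^{1/n}) : κ] = n). Then B[X]/(X^n − u) is a regular local ring with residue field κ[X]/(X^n − ū). -/

import Mathlib

/-!
For monic `f = X ^ n - u`, `A = B[X]/(f)` is a free `B`-module of rank `n`, so `B ⊆ A` is a finite
extension and going up and incomparability give `dim A = dim B`. Since `A/mA ≅ κ[X]/(f̄)` is a
field, `mA` is a maximal ideal; every maximal ideal of `A` lies over `m` by integrality, hence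
contains `mA`, so `A` is local with maximal ideal `mA`. The images of `d = dim B` generators of `m`
therefore generate the maximal ideal of `A`, and `d = dim A`.
-/

/-- A regular local ring: a Noetherian local ring whose maximal ideal is generated by
`d` elements, where `d` is the Krull dimension. -/
def IsRegularLocalRingOfPaper (B : Type) [CommRing B] : Prop :=
  IsNoetherianRing B ∧ ∃ (_ : IsLocalRing B) (s : Finset B),
    Ideal.span (s : Set B) = IsLocalRing.maximalIdeal B ∧
      (s.card : WithBot (WithTop ℕ)) = ringKrullDim B

open Polynomial IsLocalRing

section IntegralExtension

variable {R S : Type*} [CommRing R] [CommRing S] [Algebra R S] [Algebra.IsIntegral R S]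

theorem ringKrullDim_le_of_isIntegral : ringKrullDim S ≤ ringKrullDim R :=
  Order.krullDim_le_of_strictMono (PrimeSpectrum.comap (algebraMap R S))
    fun _ _ h ↦ Ideal.IsIntegral.comap_lt_comap (R := R) h

theorem ringKrullDim_le_of_isIntegral_of_faithfulSMul [FaithfulSMul R S] :
    ringKrullDim R ≤ ringKrullDim S := by
  refine iSup_le fun l ↦ ?_
  obtain ⟨P, _, _⟩ := Ideal.nonempty_primesOver (S := S) l.head.asIdeal
  obtain ⟨L, hL, -⟩ := Ideal.exists_ltSeries_of_hasGoingUp l P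
  exact hL ▸ Order.LTSeries.length_le_krullDim L

theorem ringKrullDim_eq_of_isIntegral [FaithfulSMul R S] : ringKrullDim S = ringKrullDim R :=
  ringKrullDim_le_of_isIntegral.antisymm ringKrullDim_le_of_isIntegral_of_faithfulSMul

theorem IsLocalRing.of_isIntegral_of_isMaximal_map [IsLocalRing R]
    (h : ((maximalIdeal R).map (algebraMap R S)).IsMaximal) : IsLocalRing S := by
  refine .of_unique_max_ideal ⟨_, h, fun M hM ↦ (h.eq_of_le hM.ne_top ?_).symm⟩
  have : M.comap (algebraMap R S) = maximalIdeal R :=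
    eq_maximalIdeal (Ideal.isMaximal_comap_of_isIntegral_of_isMaximal M)
  exact this ▸ Ideal.map_comap_le

end IntegralExtension

theorem IsRegularLocalRingOfPaper.of_finite {R S : Type} [CommRing R] [IsLocalRing R]
    [CommRing S] [IsLocalRing S] [Algebra R S] [Module.Finite R S] [FaithfulSMul R S]
    (hR : IsRegularLocalRingOfPaper R)
    (hm : (maximalIdeal R).map (algebraMap R S) = maximalIdeal S) :
    IsRegularLocalRingOfPaper S := by
  classical
  obtain ⟨_, _, s, hspan, hcard⟩ := hR
  refine ⟨.of_finite R S, ‹_›, s.image (algebraMap R S), ?_, ?_⟩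
  · rw [Finset.coe_image, ← Ideal.map_span, hspan, hm]
  · rw [Finset.card_image_of_injective s (FaithfulSMul.algebraMap_injective R S), hcard]
    exact (ringKrullDim_eq_of_isIntegral (R := R)).symm

namespace AdjoinRoot

variable {R : Type*} [CommRing R] [IsLocalRing R] {f : R[X]}

theorem isMaximal_map_maximalIdeal (hf : Irreducible (f.map (residue R))) :
    ((maximalIdeal R).map (of f)).IsMaximal := by
  have : (Ideal.span {f.map (residue R)}).IsMaximal :=
    PrincipalIdealRing.isMaximal_of_irreducible hf
  exact Ideal.Quotient.maximal_of_isField _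
    ((quotAdjoinRootEquivQuotPolynomialQuot (maximalIdeal R) f).toMulEquiv.isField
      ((Ideal.Quotient.maximal_ideal_iff_isField_quotient _).mp this))

theorem isLocalRing_of_irreducible_map_residue (hmonic : f.Monic)
    (hf : Irreducible (f.map (residue R))) : IsLocalRing (AdjoinRoot f) :=
  have := hmonic.finite_adjoinRoot
  .of_isIntegral_of_isMaximal_map (R := R)
    (algebraMap_eq (f := f) ▸ isMaximal_map_maximalIdeal hf)

theorem maximalIdeal_eq_map [IsLocalRing (AdjoinRoot f)] (hf : Irreducible (f.map (residue R))) :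
    maximalIdeal (AdjoinRoot f) = (maximalIdeal R).map (of f) :=
  (eq_maximalIdeal (isMaximal_map_maximalIdeal hf)).symm

noncomputable def residueFieldEquiv [IsLocalRing (AdjoinRoot f)]
    (hf : Irreducible (f.map (residue R))) :
    ResidueField (AdjoinRoot f) ≃+* (ResidueField R)[X] ⧸ Ideal.span {f.map (residue R)} :=
  (Ideal.quotEquivOfEq (maximalIdeal_eq_map hf)).trans
    (quotAdjoinRootEquivQuotPolynomialQuot (maximalIdeal R) f)

theorem isRegularLocalRingOfPaper {R : Type} [CommRing R] [IsLocalRing R] {f : R[X]}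
    (hR : IsRegularLocalRingOfPaper R) (hmonic : f.Monic)
    (hf : Irreducible (f.map (residue R))) : IsRegularLocalRingOfPaper (AdjoinRoot f) := by
  have := isLocalRing_of_irreducible_map_residue hmonic hf
  have := hmonic.free_adjoinRoot
  have := hmonic.finite_adjoinRoot
  exact hR.of_finite (by rw [algebraMap_eq, maximalIdeal_eq_map hf])

end AdjoinRoot

theorem stmt10_general (B : Type) [CommRing B] [IsLocalRing B] (hreg : IsRegularLocalRingOfPaper B)
    (n : ℕ) (u : B)
    (hirr : Irreducible (Polynomial.X ^ n -
      Polynomial.C (IsLocalRing.residue B u) : Polynomial (IsLocalRing.ResidueField B))) :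
    ∃ _ : IsLocalRing (Polynomial B ⧸ Ideal.span {Polynomial.X ^ n - Polynomial.C u}),
      IsRegularLocalRingOfPaper (Polynomial B ⧸ Ideal.span {Polynomial.X ^ n - Polynomial.C u}) ∧
      Nonempty
        (IsLocalRing.ResidueField
            (Polynomial B ⧸ Ideal.span {Polynomial.X ^ n - Polynomial.C u}) ≃+*
          (Polynomial (IsLocalRing.ResidueField B) ⧸
            Ideal.span {Polynomial.X ^ n - Polynomial.C (IsLocalRing.residue B u)})) := by
  have hmonic : (X ^ n - C u).Monic :=
    monic_X_pow_sub_C u (ne_zero_of_irreducible_X_pow_sub_C hirr)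
  have hmap : (X ^ n - C u).map (residue B) = X ^ n - C (residue B u) := by simp
  rw [← hmap] at hirr ⊢
  have := AdjoinRoot.isLocalRing_of_irreducible_map_residue hmonic hirr
  exact ⟨this, AdjoinRoot.isRegularLocalRingOfPaper hreg hmonic hirr,
    ⟨AdjoinRoot.residueFieldEquiv hirr⟩⟩

/-- let `B` be a regular local ring with residue field `κ`, `n` a natural
number and `u ∈ B` a unit such that `X ^ n - ū` is irreducible over `κ`.  Then
`B[X]/(X ^ n - u)` is a regular local ring with residue field `κ[X]/(X ^ n - ū)`. -/
theorem stmt10 (B : Type) [CommRing B] [IsLocalRing B] (hreg : IsRegularLocalRingOfPaper B)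
    (n : ℕ) (u : B) (hu : IsUnit u)
    (hirr : Irreducible (Polynomial.X ^ n -
      Polynomial.C (IsLocalRing.residue B u) : Polynomial (IsLocalRing.ResidueField B))) :
    ∃ _ : IsLocalRing (Polynomial B ⧸ Ideal.span {Polynomial.X ^ n - Polynomial.C u}),
      IsRegularLocalRingOfPaper (Polynomial B ⧸ Ideal.span {Polynomial.X ^ n - Polynomial.C u}) ∧
      Nonempty
        (IsLocalRing.ResidueField
            (Polynomial B ⧸ Ideal.span {Polynomial.X ^ n - Polynomial.C u}) ≃+*
          (Polynomial (IsLocalRing.ResidueField B) ⧸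
            Ideal.span {Polynomial.X ^ n - Polynomial.C (IsLocalRing.residue B u)})) :=
  stmt10_general B hreg n u hirr
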